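/- arXiv:2205.01653 — 2 statements merged into one kernel-verified Lean document; each statement's English description precedes it below -/
import Mathlib

section
/- Let R = ℤ[A,A⁻¹] be the ring of Laurent polynomials over ℤ, let Q = R[t]/S where S is the R-submodule of R[t] generated by the elements r_n for n ≥ 2 (defined in the context), and let M = R ⊕ R ⊕ Q as an R-module. Then there do not exist an integer d ≥ 0 and finitely generated R-modules N_k for k ≥ 1, where every element of N_k is annihilated by some power of (A^k − A^{−k}), such that M is isomorphic as an R-module to R^d ⊕ ⊕_{k≥1} N_k. (In particular, Marché's conjectured decomposition of the Kauffman bracket skein module fails for M = ℝP³ # ℝP³.) -/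
/-!
A decomposition `M ≅ R^d ⊕ ⊕ N_k` with torsion `N_k` forces the image of `M` under any linear map
to a torsion-free module to be finitely generated: the torsion summand dies, so the image is that
of `R^d`. We build an `R`-linear functional `λ : R[t] → Frac R` vanishing on `S`, hence defined
on `Q`, whose image is not finitely generated. It is fixed on the Chebyshev basis by
`λ(S_m) = 1 + κ_m / a_m` (`m` even) and `λ(S_m) = 0` (`m` odd), where
`a_m = A^{m+1} + A^{-(m+1)}` and `r_m = a_m (S_m - 1) - κ_m` for even `m`.
If the image were finitely generated, some `λ(t^n)` with `n` even would lie in the span of the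
`λ(t^j)`, `j < n`. At a primitive `(4n+4)`-th root of unity `ζ` the `a_m`, `m < n`, do not vanish,
so those `λ(t^j)` are regular at `ζ`; but `a_n(ζ) = 0 ≠ κ_n(ζ)`, so `λ(t^n)` has a pole there.
-/

open LaurentPolynomial Polynomial

noncomputable section

/-- The ring of Laurent polynomials `ℤ[A, A⁻¹]`; here `A = T 1`. -/
abbrev R : Type := LaurentPolynomial ℤ

/-- Chebyshev polynomials of the second kind: `S₀ = 1`, `S₁ = t`,
`S_{n+1} = t·S_n − S_{n−1}`, viewed in `R[t]`. -/
def cheb : ℕ → Polynomial R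
  | 0 => 1
  | 1 => X
  | n + 2 => X * cheb (n + 1) - cheb n

/-- The relation `r_n ∈ R[t]` for `n ≥ 2`:
for even `n`, `(A^{n+1} + A^{−(n+1)})(S_n(t) − 1) − 2(A + A^{−1})·∑_{k=1}^{n/2} A^{n+2−4k}`;
for odd `n`, `(A^{n+1} + A^{−(n+1)})(S_n(t) − t) − 2t·∑_{k=1}^{(n−1)/2} A^{n+1−4k}`. -/
def rel (n : ℕ) : Polynomial R :=
  if Even n then
    Polynomial.C (T ((n : ℤ) + 1) + T (-((n : ℤ) + 1))) * (cheb n - 1)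
      - Polynomial.C ((2 : R) * (T 1 + T (-1)) *
          ∑ k ∈ Finset.range (n / 2), T ((n : ℤ) + 2 - 4 * ((k : ℤ) + 1)))
  else
    Polynomial.C (T ((n : ℤ) + 1) + T (-((n : ℤ) + 1))) * (cheb n - X)
      - (2 : Polynomial R) * X *
          Polynomial.C (∑ k ∈ Finset.range ((n - 1) / 2), T ((n : ℤ) + 1 - 4 * ((k : ℤ) + 1)))

/-- The submodule `S ⊆ R[t]` generated by the `r_n`, `n ≥ 2`. -/
def SRel : Submodule R (Polynomial R) :=
  Submodule.span R {p : Polynomial R | ∃ n : ℕ, 2 ≤ n ∧ p = rel n}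

/-- The quotient module `Q = R[t]/S`. -/
abbrev Qmod : Type := Polynomial R ⧸ SRel

open Module

local notation "K" => FractionRing R

theorem Module.isTorsion_directSum {A ι : Type*} [CommRing A] [DecidableEq ι] {P : ι → Type*}
    [∀ i, AddCommGroup (P i)] [∀ i, Module A (P i)] (h : ∀ i, IsTorsion A (P i)) :
    IsTorsion A (DirectSum ι P) := by
  intro x
  induction x using DirectSum.induction_on with
  | zero => exact ⟨1, smul_zero _⟩
  | of i y =>
    obtain ⟨a, ha⟩ := h i (x := y)
    exact ⟨a, by rw [Submonoid.smul_def, ← DirectSum.of_smul, ← Submonoid.smul_def, ha, map_zero]⟩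
  | add x y hx hy =>
    obtain ⟨a, ha⟩ := hx
    obtain ⟨b, hb⟩ := hy
    refine ⟨a * b, ?_⟩
    rw [smul_add, mul_comm, mul_smul, ha, mul_comm, mul_smul, hb, smul_zero, smul_zero, add_zero]

section TorsionQuotient

variable {A M N F P : Type*} [CommRing A] [AddCommGroup M] [Module A M] [AddCommGroup N]
  [Module A N] [AddCommGroup F] [Module A F] [AddCommGroup P] [Module A P]

/-- A linear map into a torsion-free module kills the torsion part of `F × P`, so its range is
generated by the image of `F`. -/
theorem LinearMap.range_fg_of_equiv_prod [IsTorsionFree A N] [Module.Finite A F]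
    (hP : IsTorsion A P) (e : M ≃ₗ[A] F × P) (f : M →ₗ[A] N) : (LinearMap.range f).FG := by
  set g := f ∘ₗ (e.symm : F × P →ₗ[A] M)
  have hg : g ∘ₗ LinearMap.inr A F P = 0 := by
    ext t
    obtain ⟨a, ha⟩ := hP (x := t)
    have : (a : A) • g (0, t) = 0 := by
      rw [← map_smul, Prod.smul_mk, smul_zero]
      exact ha ▸ map_zero g
    exact (isRegular_iff_mem_nonZeroDivisors.mpr a.2).smul_eq_zero_iff_right.mp this
  have hrange : LinearMap.range f = LinearMap.range (g ∘ₗ LinearMap.inl A F P) := by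
    calc LinearMap.range f = LinearMap.range g :=
          (LinearMap.range_comp_of_range_eq_top f e.symm.range).symm
      _ = LinearMap.range ((g ∘ₗ LinearMap.inl A F P).coprod (g ∘ₗ LinearMap.inr A F P)) := by
          rw [← LinearMap.comp_coprod, LinearMap.coprod_inl_inr, LinearMap.comp_id]
      _ = LinearMap.range (g ∘ₗ LinearMap.inl A F P) := by
          rw [LinearMap.range_coprod, hg, LinearMap.range_zero, sup_bot_eq]
  rw [hrange]
  exact Module.Finite.iff_fg.mp (Module.Finite.range _)

end TorsionQuotient

namespace LaurentPolynomial

variable {S : Type*}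

theorem T_add_T_ne_zero [Semiring S] [Nontrivial S] {a b : ℤ} (h : a ≠ b) :
    (T a + T b : S[T;T⁻¹]) ≠ 0 := fun h0 => by
  simpa [h.symm] using congrArg (fun p : S[T;T⁻¹] => p.coeff a) h0

theorem T_sub_T_ne_zero [Ring S] [Nontrivial S] {a b : ℤ} (h : a ≠ b) :
    (T a - T b : S[T;T⁻¹]) ≠ 0 := fun h0 => by
  simpa [h.symm] using congrArg (fun p : S[T;T⁻¹] => p.coeff a) h0

end LaurentPolynomial

theorem cheb_monic_and_natDegree (m : ℕ) : (cheb m).Monic ∧ (cheb m).natDegree = m := by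
  induction m using Nat.strong_induction_on with
  | _ m ih =>
    match m with
    | 0 => exact ⟨monic_one, natDegree_one⟩
    | 1 => exact ⟨monic_X, natDegree_X⟩
    | k + 2 =>
      obtain ⟨hk1, hdk1⟩ := ih (k + 1) (by omega)
      obtain ⟨hk, hdk⟩ := ih k (by omega)
      have hX : (X * cheb (k + 1)).natDegree = k + 2 := by
        rw [monic_X.natDegree_mul hk1, hdk1, natDegree_X, add_comm]
      have hlt : (cheb k).natDegree < (X * cheb (k + 1)).natDegree := by omega
      refine ⟨(monic_X.mul hk1).sub_of_left (degree_lt_degree hlt), ?_⟩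
      rw [cheb, natDegree_sub_eq_left_of_natDegree_lt hlt, hX]

def relScale (m : ℕ) : R := T ((m : ℤ) + 1) + T (-((m : ℤ) + 1))

def relConst (m : ℕ) : R :=
  (2 : R) * (T 1 + T (-1)) * ∑ k ∈ Finset.range (m / 2), T ((m : ℤ) + 2 - 4 * ((k : ℤ) + 1))

theorem relScale_ne_zero (m : ℕ) : relScale m ≠ 0 := T_add_T_ne_zero (by omega)

theorem rel_of_even {m : ℕ} (hm : Even m) :
    rel m = Polynomial.C (relScale m) * (cheb m - 1) - Polynomial.C (relConst m) :=
  if_pos hm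

theorem rel_of_not_even {m : ℕ} (hm : ¬ Even m) : ∃ c : R,
    rel m = Polynomial.C (relScale m) * (cheb m - X) - Polynomial.C c * X := by
  refine ⟨2 * ∑ k ∈ Finset.range ((m - 1) / 2), T ((m : ℤ) + 1 - 4 * ((k : ℤ) + 1)), ?_⟩
  rw [rel, if_neg hm, map_mul, map_ofNat, relScale]
  ring

/-- The value `relFunctional (cheb m)`; `relFunctional (rel m) = 0` forces this choice. -/
def chebValue (m : ℕ) : K :=
  if Even m then 1 + algebraMap R K (relConst m) / algebraMap R K (relScale m) else 0

/-- The value `relFunctional (X ^ m)`, solved from the values on `cheb` by triangularity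
(`cheb m` is monic of degree `m`). -/
def monomialValue (m : ℕ) : K :=
  chebValue m - ∑ j ∈ (Finset.range m).attach, (cheb m).coeff j • monomialValue j
termination_by m
decreasing_by exact Finset.mem_range.mp j.2

theorem monomialValue_eq (m : ℕ) :
    monomialValue m = chebValue m - ∑ j ∈ Finset.range m, (cheb m).coeff j • monomialValue j := by
  rw [monomialValue, Finset.sum_attach (Finset.range m) fun j => (cheb m).coeff j • monomialValue j]

def relFunctional : Polynomial R →ₗ[R] K :=
  lsum fun j => LinearMap.toSpanSingleton R K (monomialValue j)

theorem relFunctional_eq_sum {p : Polynomial R} {n : ℕ} (hp : p.natDegree < n) :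
    relFunctional p = ∑ j ∈ Finset.range n, p.coeff j • monomialValue j :=
  sum_over_range' p (fun j => zero_smul R (monomialValue j)) n hp

theorem relFunctional_X_pow (m : ℕ) : relFunctional (X ^ m) = monomialValue m := by
  rw [relFunctional_eq_sum (n := m + 1) (by simp)]
  simp [coeff_X_pow]

theorem relFunctional_cheb (m : ℕ) : relFunctional (cheb m) = chebValue m := by
  obtain ⟨hmonic, hdeg⟩ := cheb_monic_and_natDegree m
  have hlead : (cheb m).coeff m = 1 := by rw [← hmonic.coeff_natDegree, hdeg]
  rw [relFunctional_eq_sum (n := m + 1) (by omega), Finset.sum_range_succ, hlead, one_smul,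
    monomialValue_eq m, add_sub_cancel]

theorem relFunctional_rel (m : ℕ) : relFunctional (rel m) = 0 := by
  have h1 : relFunctional 1 = 1 := by
    simpa [monomialValue_eq 0, chebValue, relConst] using relFunctional_X_pow 0
  have hX : relFunctional X = 0 := by
    simpa [monomialValue_eq 1, chebValue, cheb] using relFunctional_X_pow 1
  by_cases hm : Even m
  · have ha : algebraMap R K (relScale m) ≠ 0 :=
      (map_ne_zero_iff _ (IsFractionRing.injective R K)).mpr (relScale_ne_zero m)
    rw [rel_of_even hm, ← Polynomial.smul_eq_C_mul, ← mul_one (Polynomial.C (relConst m)),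
      ← Polynomial.smul_eq_C_mul, map_sub, map_smul, map_smul, map_sub, relFunctional_cheb, h1,
      chebValue, if_pos hm, add_sub_cancel_left, Algebra.smul_def, Algebra.smul_def,
      mul_div_cancel₀ _ ha, mul_one, sub_self]
  · obtain ⟨c, hc⟩ := rel_of_not_even hm
    rw [hc, ← Polynomial.smul_eq_C_mul, ← Polynomial.smul_eq_C_mul, map_sub, map_smul, map_smul,
      map_sub, relFunctional_cheb, hX, chebValue, if_neg hm]
    simp

theorem SRel_le_ker_relFunctional : SRel ≤ LinearMap.ker relFunctional := by
  rw [SRel, Submodule.span_le]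
  rintro p ⟨n, -, rfl⟩
  exact relFunctional_rel n

theorem range_relFunctional :
    LinearMap.range relFunctional = Submodule.span R (Set.range monomialValue) := by
  refine le_antisymm ?_ (Submodule.span_le.mpr ?_)
  · rintro _ ⟨p, rfl⟩
    exact Submodule.sum_mem _ fun j _ =>
      Submodule.smul_mem _ _ (Submodule.subset_span ⟨j, rfl⟩)
  · rintro _ ⟨m, rfl⟩
    exact ⟨X ^ m, relFunctional_X_pow m⟩

section RegularSubalgebra

variable {A L F : Type*} [CommRing A] [IsDomain A] [Field L] [Algebra A L] [IsFractionRing A L]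
  [CommRing F] [IsDomain F]

variable (L) in
/-- The fractions `a / s` with `φ s ≠ 0`: the local ring of `A` at the prime `ker φ`, inside the
fraction field `L`. -/
def regularSubalgebra (φ : A →+* F) : Subalgebra A L :=
  Localization.subalgebra.ofField L ((nonZeroDivisors F).comap φ) fun s hs =>
    mem_nonZeroDivisors_of_ne_zero fun h0 => by simp [h0] at hs

theorem mem_regularSubalgebra {φ : A →+* F} {x : L} : x ∈ regularSubalgebra L φ ↔
    ∃ a s : A, φ s ≠ 0 ∧ x = algebraMap A L a * (algebraMap A L s)⁻¹ := by
  change x ∈ {x | ∃ (a s : A) (_ : s ∈ (nonZeroDivisors F).comap φ), _} ↔ _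
  simp

theorem inv_mem_regularSubalgebra {φ : A →+* F} {s : A} (hs : φ s ≠ 0) :
    (algebraMap A L s)⁻¹ ∈ regularSubalgebra L φ :=
  mem_regularSubalgebra.mpr ⟨1, s, hs, by rw [map_one, one_mul]⟩

theorem div_notMem_regularSubalgebra {φ : A →+* F} {a b : A} (ha0 : a ≠ 0) (ha : φ a = 0)
    (hb : φ b ≠ 0) : algebraMap A L b / algebraMap A L a ∉ regularSubalgebra L φ := by
  rw [mem_regularSubalgebra]
  rintro ⟨r, s, hs, hbr⟩
  have hs0 : algebraMap A L s ≠ 0 := (map_ne_zero_iff _ (IsFractionRing.injective A L)).mpr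
    (fun h => hs (h ▸ (RingHom.ker φ).zero_mem))
  have ha0' : algebraMap A L a ≠ 0 := (map_ne_zero_iff _ (IsFractionRing.injective A L)).mpr ha0
  have hcross : b * s = r * a := IsFractionRing.injective A L <| by
    rw [map_mul, map_mul]
    field_simp at hbr
    linear_combination hbr
  exact mul_ne_zero hb hs (by rw [← map_mul, hcross, map_mul, ha, mul_zero])

end RegularSubalgebra

section Regularity

variable {F : Type*} [CommRing F] [IsDomain F] {φ : R →+* F}

theorem chebValue_mem_regularSubalgebra {m : ℕ} (hm : φ (relScale m) ≠ 0) :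
    chebValue m ∈ regularSubalgebra K φ := by
  unfold chebValue
  split_ifs
  · exact add_mem (one_mem _) (mul_mem (Subalgebra.algebraMap_mem _ _)
      (inv_mem_regularSubalgebra hm))
  · exact zero_mem _

theorem monomialValue_mem_regularSubalgebra {n : ℕ} (h : ∀ m ≤ n, φ (relScale m) ≠ 0) :
    monomialValue n ∈ regularSubalgebra K φ := by
  induction n using Nat.strong_induction_on with
  | _ n ih =>
    rw [monomialValue_eq]
    refine sub_mem (chebValue_mem_regularSubalgebra (h n le_rfl)) (sum_mem fun j hj => ?_)
    have hjn := Finset.mem_range.mp hj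
    exact Subalgebra.smul_mem _ (ih j hjn fun m hm => h m (by omega)) _

/-- At a point where `relScale n` vanishes but `relConst n` does not, `chebValue n` has a pole
that the lower `monomialValue j` cannot cancel. -/
theorem monomialValue_notMem_regularSubalgebra {n : ℕ} (hn : Even n) (hscale : φ (relScale n) = 0)
    (hconst : φ (relConst n) ≠ 0) (hlt : ∀ m < n, φ (relScale m) ≠ 0) :
    monomialValue n ∉ regularSubalgebra K φ := by
  intro hmem
  have hlower : ∑ j ∈ Finset.range n, (cheb n).coeff j • monomialValue j ∈ regularSubalgebra K φ :=
    sum_mem fun j hj => Subalgebra.smul_mem _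
      (monomialValue_mem_regularSubalgebra fun m hm => hlt m (by simp at hj; omega)) _
  refine div_notMem_regularSubalgebra (L := K) (relScale_ne_zero n) hscale hconst ?_
  have := sub_mem (add_mem hmem hlower) (one_mem (regularSubalgebra K φ))
  rwa [monomialValue_eq, chebValue, if_pos hn, sub_add_cancel, add_sub_cancel_left] at this

end Regularity

section RootOfUnity

variable {F : Type*} [Field F] {n : ℕ} {ζ : F}

def evalAt (ζ : F) (h0 : ζ ≠ 0) : R →+* F := eval₂ (Int.castRingHom F) (Units.mk0 ζ h0)

theorem evalAt_T (h0 : ζ ≠ 0) (k : ℤ) : evalAt ζ h0 (T k) = ζ ^ k := by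
  simp [evalAt]

theorem evalAt_relScale_eq_zero_iff (h0 : ζ ≠ 0) (m : ℕ) :
    evalAt ζ h0 (relScale m) = 0 ↔ ζ ^ (2 * m + 2) = -1 := by
  set x := ζ ^ ((m : ℤ) + 1)
  have hx : x ≠ 0 := zpow_ne_zero _ h0
  have hpow : ζ ^ (2 * m + 2) = x * x := by
    rw [← zpow_add₀ h0, ← zpow_natCast]; push_cast; ring_nf
  rw [relScale, map_add, evalAt_T, evalAt_T, zpow_neg, hpow, ← mul_right_inj' hx, mul_add,
    mul_inv_cancel₀ hx, mul_zero, add_eq_zero_iff_eq_neg]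

namespace IsPrimitiveRoot

theorem pow_eq_neg_one_of_two_mul {k : ℕ} (hζ : IsPrimitiveRoot ζ (2 * k)) (hk : k ≠ 0) :
    ζ ^ k = -1 := by
  refine eq_neg_one_of_two_right ?_
  simpa [hk] using hζ.pow_of_dvd (p := k) hk (dvd_mul_left k 2)

theorem two_ne_zero_of_two_mul {k : ℕ} (hζ : IsPrimitiveRoot ζ (2 * k)) (hk : k ≠ 0) :
    (2 : F) ≠ 0 := by
  intro h2
  refine hζ.pow_ne_one_of_pos_of_lt (l := k) (by omega) (by omega) ?_
  rw [hζ.pow_eq_neg_one_of_two_mul hk]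
  linear_combination -h2

theorem evalAt_relScale_self (hζ : IsPrimitiveRoot ζ (4 * n + 4)) (h0 : ζ ≠ 0) :
    evalAt ζ h0 (relScale n) = 0 :=
  (evalAt_relScale_eq_zero_iff h0 n).mpr <|
    (show 4 * n + 4 = 2 * (2 * n + 2) by ring) ▸ hζ |>.pow_eq_neg_one_of_two_mul (by omega)

theorem evalAt_relScale_ne_zero (hζ : IsPrimitiveRoot ζ (4 * n + 4)) (h0 : ζ ≠ 0) {m : ℕ}
    (hm : m < n) : evalAt ζ h0 (relScale m) ≠ 0 := by
  rw [Ne, evalAt_relScale_eq_zero_iff]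
  intro h
  have h1 : ζ ^ (4 * m + 4) = 1 := by
    rw [show 4 * m + 4 = (2 * m + 2) * 2 by ring, pow_mul, h, neg_one_sq]
  have := Nat.le_of_dvd (by omega) (hζ.pow_eq_one_iff_dvd _ |>.mp h1)
  omega

theorem evalAt_relConst_ne_zero (hζ : IsPrimitiveRoot ζ (4 * n + 4)) (h0 : ζ ≠ 0)
    (hn : Even n) (hn0 : n ≠ 0) : evalAt ζ h0 (relConst n) ≠ 0 := by
  have h2 : (2 : F) ≠ 0 :=
    (show 4 * n + 4 = 2 * (2 * n + 2) by ring) ▸ hζ |>.two_ne_zero_of_two_mul (by omega)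
  obtain ⟨l, rfl⟩ := hn
  have hscale : evalAt ζ h0 (T 1 + T (-1)) ≠ 0 := by
    simpa [relScale] using hζ.evalAt_relScale_ne_zero h0 (m := 0) (by omega)
  set x := ζ ^ (-4 : ℤ)
  have hterm : ∀ k : ℕ, evalAt ζ h0 (T (((l + l : ℕ) : ℤ) + 2 - 4 * ((k : ℤ) + 1)))
      = ζ ^ (2 * (l : ℤ) - 2) * x ^ k := by
    intro k
    rw [evalAt_T, ← zpow_natCast x, ← zpow_mul, ← zpow_add₀ h0]
    push_cast; ring_nf
  have hxl : x ^ l ≠ 1 := by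
    rw [← zpow_natCast, ← zpow_mul, Ne, hζ.zpow_eq_one_iff_dvd]
    intro hdvd
    have := Int.eq_zero_of_dvd_of_natAbs_lt_natAbs hdvd (by omega)
    omega
  have hgeom : ∑ k ∈ Finset.range l, x ^ k ≠ 0 := fun h => by
    have := geom_sum_mul x l
    rw [h, zero_mul] at this
    exact hxl (sub_eq_zero.mp this.symm)
  rw [relConst, map_mul, map_mul, map_ofNat, map_sum, Finset.sum_congr rfl fun k _ => hterm k,
    ← Finset.mul_sum, show (l + l) / 2 = l by omega]
  exact mul_ne_zero (mul_ne_zero h2 hscale) (mul_ne_zero (zpow_ne_zero _ h0) hgeom)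

end IsPrimitiveRoot

end RootOfUnity

theorem monomialValue_notMem_span_lt {n : ℕ} (hn : Even n) (hn0 : n ≠ 0) :
    monomialValue n ∉ Submodule.span R (monomialValue '' Set.Iio n) := by
  have hζ := Complex.isPrimitiveRoot_exp (4 * n + 4) (by omega)
  set ζ := Complex.exp (2 * Real.pi * Complex.I / ((4 * n + 4 : ℕ) : ℂ))
  have h0 : ζ ≠ 0 := Complex.exp_ne_zero _
  have hspan : Submodule.span R (monomialValue '' Set.Iio n) ≤
      Subalgebra.toSubmodule (regularSubalgebra K (evalAt ζ h0)) := by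
    rw [Submodule.span_le]
    rintro _ ⟨j, hj, rfl⟩
    exact monomialValue_mem_regularSubalgebra fun m hm =>
      hζ.evalAt_relScale_ne_zero h0 (lt_of_le_of_lt hm hj)
  exact fun hmem => monomialValue_notMem_regularSubalgebra hn (hζ.evalAt_relScale_self h0)
    (hζ.evalAt_relConst_ne_zero h0 hn hn0) (fun m hm => hζ.evalAt_relScale_ne_zero h0 hm)
    (hspan hmem)

theorem not_fg_span_range_monomialValue :
    ¬ (Submodule.span R (Set.range monomialValue)).FG := by
  intro hfg
  let chain : ℕ →o Submodule R K :=
    ⟨fun n => Submodule.span R (monomialValue '' Set.Iio n), fun _ _ hmn =>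
      Submodule.span_mono (Set.image_mono (Set.Iio_subset_Iio hmn))⟩
  obtain ⟨D, hD⟩ := hfg.stabilizes_of_iSup_eq chain <| by
    change ⨆ n, Submodule.span R (monomialValue '' Set.Iio n) = _
    rw [← Submodule.span_iUnion, ← Set.image_iUnion, Set.iUnion_Iio, Set.image_univ]
  have hmem : monomialValue (2 * D + 2) ∈ chain D := hD ▸ Submodule.subset_span ⟨_, rfl⟩
  exact monomialValue_notMem_span_lt ⟨D + 1, by ring⟩ (by omega)
    (chain.monotone (by omega) hmem)

open DirectSum in
/-- `N k` plays the role of `N_{k+1}`. -/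
theorem no_marche_decomposition :
    ¬ ∃ (d : ℕ) (N : ℕ → Type) (_ : ∀ k, AddCommGroup (N k)) (_ : ∀ k, Module R (N k)),
      (∀ k, Module.Finite R (N k)) ∧
      (∀ (k : ℕ) (x : N k), ∃ m : ℕ,
        ((T ((k : ℤ) + 1) - T (-((k : ℤ) + 1)) : R) ^ m) • x = 0) ∧
      Nonempty ((R × R × Qmod) ≃ₗ[R] (Fin d → R) × (⨁ k : ℕ, N k)) := by
  rintro ⟨d, N, _, _, -, hpow, ⟨e⟩⟩
  classical
  have htorsion (k : ℕ) : IsTorsion R (N k) := fun x => by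
    obtain ⟨m, hm⟩ := hpow k x
    exact ⟨⟨_, mem_nonZeroDivisors_of_ne_zero (pow_ne_zero m (T_sub_T_ne_zero (by omega)))⟩, hm⟩
  let functional : R × R × Qmod →ₗ[R] K := SRel.liftQ relFunctional SRel_le_ker_relFunctional ∘ₗ
    LinearMap.snd R R Qmod ∘ₗ LinearMap.snd R R (R × Qmod)
  have hrange : LinearMap.range functional = Submodule.span R (Set.range monomialValue) := by
    rw [LinearMap.range_comp_of_range_eq_top _
        (LinearMap.range_eq_top.mpr fun q => ⟨(0, 0, q), rfl⟩),
      Submodule.range_liftQ, range_relFunctional]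
  exact not_fg_span_range_monomialValue <|
    hrange ▸ LinearMap.range_fg_of_equiv_prod (isTorsion_directSum htorsion) e functional

end
end

section
/- Let R = ℤ[A,A⁻¹] be the ring of Laurent polynomials over ℤ, let K = Frac(R) ≅ ℚ(A) be its field of fractions, let Q = R[t]/S where S is the R-submodule of R[t] generated by the elements r_n for n ≥ 2 (defined in the context), and let M = R ⊕ R ⊕ Q as an R-module. Then the rank of M over R is four; equivalently, the K-vector space K ⊗_R M has dimension 4 (i.e., K ⊗_R Q has dimension 2 over K). -/
/-!
Base change to `K = Frac(R)` preserves rank and turns `Q = R[t]/S` into `K[t]/V`, where `V` is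
the `K`-span of the relations `r_n`. The relation `r_n` has degree exactly `n`, its leading
coefficient being `A^{n+1} + A^{-(n+1)} ≠ 0`; so `1, t` together with the `r_n` (`n ≥ 2`) form a
basis of `K[t]`, and `K[t]/V` has basis `1, t`. Hence `rank M = 1 + 1 + 2 = 4`.
-/

open LaurentPolynomial Polynomial

noncomputable section

universe u

theorem rank_prod_eq_add {A : Type u} [Ring A] [HasRankNullity.{u} A] (M N : Type u)
    [AddCommGroup M] [Module A M] [AddCommGroup N] [Module A N] :
    Module.rank A (M × N) = Module.rank A M + Module.rank A N := by
  have h := (LinearMap.snd A M N).rank_range_add_rank_ker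
  rw [LinearMap.range_eq_top.mpr LinearMap.snd_surjective, rank_top, LinearMap.ker_snd,
    rank_range_of_injective _ LinearMap.inl_injective] at h
  rw [← h, add_comm]

namespace Polynomial

section Localization

variable {A : Type u} [CommRing A] (B : Type u) [CommRing B] [Algebra A B]

theorem isBaseChange_mapAlgHom : IsBaseChange B (mapAlgHom (Algebra.ofId A B)).toLinearMap :=
  .of_equiv (polyEquivTensor' A B).symm fun p => by
    simp [polyEquivTensor_symm_apply_tmul_eq_smul]

theorem rank_quotient_span_eq_of_isLocalization (p : Submonoid A) [IsLocalization p B]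
    (hp : p ≤ nonZeroDivisors A) (s : Set A[X]) :
    Module.rank A (A[X] ⧸ Submodule.span A s) =
      Module.rank B (B[X] ⧸ Submodule.span B (map (algebraMap A B) '' s)) := by
  let f := (mapAlgHom (Algebra.ofId A B)).toLinearMap
  have : IsLocalizedModule p f :=
    (isLocalizedModule_iff_isBaseChange p B f).mpr (isBaseChange_mapAlgHom B)
  rw [IsLocalization.rank_eq B p hp, ← IsLocalizedModule.rank_eq p hp
    ((Submodule.span A s).toLocalizedQuotient' B p f), Submodule.localized'_span]
  rfl

end Localization

section Field

variable {K : Type*} [Field K]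

def Sequence.extendByXPow (q : ℕ → K[X]) (k : ℕ) (hq : ∀ n, k ≤ n → (q n).degree = n) :
    Sequence K where
  elems' n := if n < k then X ^ n else q n
  degree_eq' n := by
    split_ifs with h
    · exact degree_X_pow n
    · exact hq n (not_lt.mp h)

/-- The span of the `q n` is complementary to `degreeLT K k`: both are spanned by parts of the
basis `Sequence.extendByXPow q k hq`. -/
theorem rank_quotient_span_of_degree_eq (q : ℕ → K[X]) (k : ℕ)
    (hq : ∀ n, k ≤ n → (q n).degree = n) :
    Module.rank K (K[X] ⧸ Submodule.span K (q '' Set.Ici k)) = k := by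
  set s := Sequence.extendByXPow q k hq
  have hunit (i : ℕ) : IsUnit (s i).leadingCoeff :=
    (leadingCoeff_ne_zero.mpr (s.ne_zero i)).isUnit
  have hs : q '' Set.Ici k = s '' Set.Ici k :=
    Set.image_congr fun n hn => (if_neg (not_lt.mpr hn)).symm
  have hcompl : IsCompl (Submodule.span K (s '' Set.Ici k)) (Submodule.span K (s '' Set.Iio k)) :=
    s.linearIndependent.isCompl_span_image (s.span hunit) (Set.compl_Ici (a := k) ▸ isCompl_compl)
  rw [hs, (Submodule.quotientEquivOfIsCompl _ _ hcompl).rank_eq,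
    s.span_degreeLT fun i _ => hunit i, (degreeLTEquiv K k).rank_eq, rank_fin_fun]

end Field

theorem degree_C_mul_sub_sub {A : Type*} [Ring A] [NoZeroDivisors A] {u : A} {p a b : A[X]}
    (hu : u ≠ 0) (ha : a.degree < p.degree) (hb : b.degree < p.degree) :
    (C u * (p - a) - b).degree = p.degree := by
  have h : (C u * (p - a)).degree = p.degree := by
    rw [degree_C_mul hu, degree_sub_eq_left_of_degree_lt ha]
  rw [degree_sub_eq_left_of_degree_lt (h ▸ hb), h]

end Polynomial

theorem LaurentPolynomial.T_add_T_neg_ne_zero {A : Type*} [Semiring A] [Nontrivial A] {m : ℤ}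
    (hm : m ≠ 0) : (T m + T (-m) : A[T;T⁻¹]) ≠ 0 := by
  intro h
  have := congrArg (fun f : A[T;T⁻¹] => f.coeff m) h
  simp [T_apply, show -m ≠ m by omega] at this

theorem degree_cheb : ∀ n, (cheb n).degree = n
  | 0 => degree_one
  | 1 => degree_X
  | n + 2 => by
    have h : (cheb (n + 1) * X).degree = ↑(n + 2) := by
      rw [degree_mul_X, degree_cheb (n + 1)]
      rfl
    have hlt : (cheb n).degree < (cheb (n + 1) * X).degree := by
      rw [h, degree_cheb n]
      exact_mod_cast (by omega : n < n + 2)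
    rw [cheb, X_mul, degree_sub_eq_left_of_degree_lt hlt, h]

theorem degree_rel {n : ℕ} (hn : 2 ≤ n) : (rel n).degree = n := by
  have hu : (T ((n : ℤ) + 1) + T (-((n : ℤ) + 1)) : R) ≠ 0 := T_add_T_neg_ne_zero (by omega)
  have hlow {p : Polynomial R} (hp : p.degree ≤ 1) : p.degree < (cheb n).degree :=
    hp.trans_lt (by rw [degree_cheb]; exact_mod_cast hn)
  rw [← degree_cheb n, rel]
  split_ifs <;>
    exact degree_C_mul_sub_sub hu (hlow (by compute_degree!)) (hlow (by compute_degree!))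

theorem rank_Qmod : Module.rank R Qmod = 2 := by
  have hgen : {p : Polynomial R | ∃ n : ℕ, 2 ≤ n ∧ p = rel n} = rel '' Set.Ici 2 := by
    ext p
    simp [eq_comm]
  unfold Qmod SRel
  rw [rank_quotient_span_eq_of_isLocalization (FractionRing R) _ le_rfl, hgen,
    Set.image_image, rank_quotient_span_of_degree_eq _ 2 fun n hn => by
      rw [degree_map_eq_of_injective (IsFractionRing.injective R _), degree_rel hn]]
  exact Nat.cast_ofNat

open TensorProduct in
/-- The rank of `M = R × R × Q` over `R = ℤ[A,A⁻¹]` is four: the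
`K = Frac(R) ≅ ℚ(A)`-vector space `K ⊗_R M` is `4`-dimensional. -/
theorem rank_eq_four :
    Module.rank (FractionRing R) (FractionRing R ⊗[R] (R × R × Qmod)) = 4 := by
  rw [(TensorProduct.isBaseChange R _ (FractionRing R)).rank_eq, rank_prod_eq_add,
    rank_prod_eq_add, Module.rank_self, rank_Qmod]
  norm_num

end
end
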